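/- arXiv:2011.15055 — 3 statements merged into one kernel-verified Lean document; each statement's English description precedes it below -/
import Mathlib

section
/- There exist nonzero real numbers α₁, α₂, α₃, a constant c > 0, and a natural number N such that for every n > N there is a set E of n points in ℝ² containing at least c · n ordered triples (x₁, x₂, x₃) of pairwise distinct points with x₁ · x₂ = α₁, x₂ · x₃ = α₂, and x₃ · x₁ = α₃. -/
/-!
Put points on the vertical line `x = 1`, writing `p(y) = (1, y)`, so that
`⟪p(a), p(b)⟫ = 1 + a b`. For every `t > 1` the three distinct points `p(t)`, `p(t⁻¹)`, `p(0)`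
then form a dot product triangle of type `(2, 1, 1)`. Taking `t = 2, …, k + 1` gives `k`
triangles on `2k + 1` points, and padding this set with arbitrary points up to `n` points
keeps these triangles, giving about `n / 2` triangles.
-/

open scoped InnerProductSpace

noncomputable section

/-- Points in the plane. -/
abbrev Pt2 : Type := EuclideanSpace ℝ (Fin 2)

/-- The set of dot product `C₃`-configurations (dot product triangles) of type
`(α₁, α₂, α₃)` in a point set `E`: ordered triples of pairwise distinct points of `E`
with the three prescribed pairwise dot products. -/
def dpTriangles (E : Finset Pt2) (α₁ α₂ α₃ : ℝ) : Set (Pt2 × Pt2 × Pt2) :=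
  {x | x.1 ∈ E ∧ x.2.1 ∈ E ∧ x.2.2 ∈ E ∧
    x.1 ≠ x.2.1 ∧ x.1 ≠ x.2.2 ∧ x.2.1 ≠ x.2.2 ∧
    ⟪x.1, x.2.1⟫_ℝ = α₁ ∧ ⟪x.2.1, x.2.2⟫_ℝ = α₂ ∧ ⟪x.2.2, x.1⟫_ℝ = α₃}

namespace DpTriangle

def linePt (y : ℝ) : Pt2 := !₂[1, y]

lemma inner_linePt (a b : ℝ) : ⟪linePt a, linePt b⟫_ℝ = 1 + a * b := by
  simp [linePt, PiLp.inner_apply, Fin.sum_univ_two, mul_comm]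

lemma linePt_injective : Function.Injective linePt := by
  intro a b hab
  simpa [linePt] using congrArg (· 1) hab

lemma dpTriangles_finite (E : Finset Pt2) (α₁ α₂ α₃ : ℝ) :
    (dpTriangles E α₁ α₂ α₃).Finite :=
  ((E.finite_toSet.prod (E.finite_toSet.prod E.finite_toSet))).subset
    fun _ hx => ⟨hx.1, hx.2.1, hx.2.2.1⟩

lemma dpTriangles_mono {E F : Finset Pt2} (hEF : E ⊆ F) (α₁ α₂ α₃ : ℝ) :
    dpTriangles E α₁ α₂ α₃ ⊆ dpTriangles F α₁ α₂ α₃ :=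
  fun _ ⟨h₁, h₂, h₃, h⟩ => ⟨hEF h₁, hEF h₂, hEF h₃, h⟩

def reciprocalTriangle (t : ℝ) : Pt2 × Pt2 × Pt2 := (linePt t, linePt t⁻¹, linePt 0)

lemma reciprocalTriangle_injective : Function.Injective reciprocalTriangle :=
  fun _ _ h => linePt_injective (congrArg Prod.fst h)

def reciprocalSet (S : Finset ℝ) : Finset Pt2 :=
  insert (linePt 0) (S.image linePt ∪ S.image (fun t => linePt t⁻¹))

lemma card_reciprocalSet_le (S : Finset ℝ) : (reciprocalSet S).card ≤ 2 * S.card + 1 := by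
  calc (reciprocalSet S).card
      ≤ (S.image linePt ∪ S.image (fun t => linePt t⁻¹)).card + 1 := Finset.card_insert_le _ _
    _ ≤ (S.image linePt).card + (S.image (fun t => linePt t⁻¹)).card + 1 := by
        gcongr; exact Finset.card_union_le _ _
    _ ≤ 2 * S.card + 1 := by
        have := Finset.card_image_le (s := S) (f := linePt)
        have := Finset.card_image_le (s := S) (f := fun t => linePt t⁻¹)
        omega

lemma reciprocalTriangle_mem_dpTriangles {S : Finset ℝ} {t : ℝ} (htS : t ∈ S) (ht : 1 < t) :
    reciprocalTriangle t ∈ dpTriangles (reciprocalSet S) 2 1 1 := by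
  have ht₀ : t ≠ 0 := by positivity
  have ht_inv : t ≠ t⁻¹ := fun h => by
    have := inv_lt_one_of_one_lt₀ ht
    linarith
  refine ⟨?_, ?_, Finset.mem_insert_self _ _,
    linePt_injective.ne ht_inv, linePt_injective.ne ht₀, linePt_injective.ne (inv_ne_zero ht₀),
    ?_, ?_, ?_⟩ <;> simp only [reciprocalTriangle]
  · exact Finset.mem_insert_of_mem (Finset.mem_union_left _ (Finset.mem_image_of_mem _ htS))
  · exact Finset.mem_insert_of_mem
      (Finset.mem_union_right _ (Finset.mem_image_of_mem (fun t => linePt t⁻¹) htS))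
  · rw [inner_linePt, mul_inv_cancel₀ ht₀]; norm_num
  all_goals rw [inner_linePt]; ring

lemma card_le_ncard_dpTriangles_reciprocalSet {S : Finset ℝ} (hS : ∀ t ∈ S, 1 < t) :
    S.card ≤ (dpTriangles (reciprocalSet S) 2 1 1).ncard := by
  rw [← Set.ncard_coe_finset]
  exact Set.ncard_le_ncard_of_injOn reciprocalTriangle
    (fun t ht => reciprocalTriangle_mem_dpTriangles ht (hS t ht))
    reciprocalTriangle_injective.injOn (dpTriangles_finite _ 2 1 1)

lemma exists_finset_card_le_le_ncard_dpTriangles (k : ℕ) :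
    ∃ E : Finset Pt2, E.card ≤ 2 * k + 1 ∧ k ≤ (dpTriangles E 2 1 1).ncard := by
  set S : Finset ℝ := (Finset.range k).image fun i : ℕ => (i : ℝ) + 2
  have hS : S.card = k := by
    rw [Finset.card_image_of_injective _ fun i j h => by simpa using h, Finset.card_range]
  have hS₁ : ∀ t ∈ S, 1 < t := by
    simp only [S, Finset.mem_image]
    rintro _ ⟨i, -, rfl⟩
    linarith [i.cast_nonneg (α := ℝ)]
  refine ⟨reciprocalSet S, hS ▸ card_reciprocalSet_le S, ?_⟩
  simpa [hS] using card_le_ncard_dpTriangles_reciprocalSet hS₁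

end DpTriangle

open DpTriangle in
/-- **lower bound in Theorem on dot product triangles.** There exist
nonzero reals `α₁, α₂, α₃`, a constant `c > 0`, and `N` such that for every `n > N` some
set of `n` points in the plane contains at least `c · n` dot product triangles of type
`(α₁, α₂, α₃)`. -/
theorem dpTriangle_lower_bound :
    ∃ α₁ α₂ α₃ : ℝ, α₁ ≠ 0 ∧ α₂ ≠ 0 ∧ α₃ ≠ 0 ∧
      ∃ c : ℝ, 0 < c ∧ ∃ N : ℕ, ∀ n : ℕ, N < n →
        ∃ E : Finset Pt2, E.card = n ∧
          c * (n : ℝ) ≤ ((dpTriangles E α₁ α₂ α₃).ncard : ℝ) := by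
  refine ⟨2, 1, 1, two_ne_zero, one_ne_zero, one_ne_zero, 1 / 4, by norm_num, 3, ?_⟩
  intro n hn
  obtain ⟨E₀, hE₀_card, hE₀_tri⟩ := exists_finset_card_le_le_ncard_dpTriangles ((n - 1) / 2)
  obtain ⟨E, hE₀E, hE_card⟩ := Infinite.exists_superset_card_eq E₀ n (by omega)
  have hk : (n - 1) / 2 ≤ (dpTriangles E 2 1 1).ncard :=
    hE₀_tri.trans (Set.ncard_le_ncard (dpTriangles_mono hE₀E 2 1 1) (dpTriangles_finite E 2 1 1))
  have hn : (n : ℝ) ≤ 4 * (dpTriangles E 2 1 1).ncard := by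
    exact_mod_cast (show n ≤ 4 * (dpTriangles E 2 1 1).ncard by omega)
  exact ⟨E, hE_card, by linarith⟩
end
end

section
/- Fix an integer k ≥ 2 and positive real numbers w₁, …, w_k. Then: (i) there is a constant C > 0 such that for every n and every set E of n points in ℝ², the number of (k+1)-tuples (x₀, x₁, …, x_k) of pairwise distinct points of E with ‖x₀ − x_i‖ = w_i for all i = 1, …, k is at most C · n^k; and (ii) there exist a constant c > 0 and N such that for every n > N there is a set E of n points in ℝ² containing at least c · n^k such tuples. In other words, for the k-star G with edge weights w₁, …, w_k, f(G; n) ≈ n^k. -/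
/-!
Upper bound: a configuration is determined by its leaves `x 1, …, x k` together with its
center, and the center lies on the circles of radii `w 1`, `w 2` around the distinct points
`x 1`, `x 2`, which meet in at most two points. Hence there are at most `2 |E|^k`
configurations.

Lower bound: with `m = ⌊n / (k+1)⌋`, put the center at the origin and `m` distinct points on
the circle of radius `w i` for each `i`, all `k m` of them distinct. Every choice of one point
per circle is a configuration, which gives `m^k ≳ n^k` of them.
-/

open scoped InnerProductSpace

noncomputable section

/-- The set of distance `k`-star configurations with weights `w` in a point set `E`:
`(k+1)`-tuples `(x 0, x 1, …, x k)` of pairwise distinct points of `E` such that the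
distance from the center `x 0` to the `i`-th leaf `x (i+1)` equals `w i`. -/
def distStarConfigs (k : ℕ) (w : Fin k → ℝ) (E : Finset Pt2) : Set (Fin (k + 1) → Pt2) :=
  {x | (∀ i, x i ∈ E) ∧ Function.Injective x ∧ ∀ i : Fin k, ‖x 0 - x i.succ‖ = w i}

open Metric Module Function

theorem encard_sphere_inter_sphere_le_two {V P : Type*} [NormedAddCommGroup V]
    [InnerProductSpace ℝ V] [MetricSpace P] [NormedAddTorsor V P] [FiniteDimensional ℝ V]
    (hd : finrank ℝ V = 2) {a b : P} (hab : a ≠ b) (r s : ℝ) :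
    (sphere a r ∩ sphere b s).encard ≤ 2 := by
  by_cases h : (sphere a r ∩ sphere b s).Subsingleton
  · exact (Set.encard_le_one_iff_subsingleton.mpr h).trans (by norm_num)
  obtain ⟨p, ⟨hpa, hpb⟩, q, ⟨hqa, hqb⟩, hpq⟩ := Set.not_subsingleton_iff.mp h
  calc _ ≤ ({p, q} : Set P).encard := Set.encard_le_encard fun x hx =>
        EuclideanGeometry.eq_of_dist_eq_of_dist_eq_of_finrank_eq_two hd hab hpq hpa hqa hx.1
          hpb hqb hx.2
    _ = 2 := Set.encard_pair hpq

theorem finite_distStarConfigs (k : ℕ) (w : Fin k → ℝ) (E : Finset Pt2) :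
    (distStarConfigs k w E).Finite :=
  (Set.Finite.pi' fun _ => E.finite_toSet).subset fun _ hx => hx.1

theorem encard_distStarConfigs_fiber_le_two {k : ℕ} (hk : 2 ≤ k) (w : Fin k → ℝ)
    (E : Finset Pt2) (y : Fin k → Pt2) :
    {x ∈ distStarConfigs k w E | Fin.tail x = y}.encard ≤ 2 := by
  obtain h | ⟨x₀, ⟨-, hx₀, -⟩, rfl⟩ := Set.eq_empty_or_nonempty
    {x ∈ distStarConfigs k w E | Fin.tail x = y}
  · simp [h]
  let i₀ : Fin k := ⟨0, by omega⟩
  let i₁ : Fin k := ⟨1, by omega⟩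
  have hleaves : Fin.tail x₀ i₀ ≠ Fin.tail x₀ i₁ := fun h => by
    simpa [i₀, i₁, Fin.ext_iff] using hx₀ h
  refine le_trans (Set.encard_le_encard_of_injOn (f := fun x => x 0) ?_ ?_)
    (encard_sphere_inter_sphere_le_two finrank_euclideanSpace_fin hleaves (w i₀) (w i₁))
  · rintro x ⟨⟨-, -, hdist⟩, hx⟩
    simp only [Set.mem_inter_iff, Metric.mem_sphere, dist_eq_norm, ← hx]
    exact ⟨hdist i₀, hdist i₁⟩
  · rintro x ⟨-, hx⟩ x' ⟨-, hx'⟩ h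
    rw [← Fin.cons_self_tail x, ← Fin.cons_self_tail x', hx, hx']
    exact congrArg (Fin.cons · _) h

theorem ncard_distStarConfigs_le {k : ℕ} (hk : 2 ≤ k) (w : Fin k → ℝ) (E : Finset Pt2) :
    (distStarConfigs k w E).ncard ≤ 2 * E.card ^ k := by
  classical
  have hfin := finite_distStarConfigs k w E
  rw [Set.ncard_eq_toFinset_card _ hfin]
  calc _ ≤ 2 * (Fintype.piFinset fun _ : Fin k => E).card := by
        refine Finset.card_le_mul_card_image_of_maps_to (f := Fin.tail) ?_ 2 fun y _ => ?_
        · intro x hx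
          exact Fintype.mem_piFinset.mpr fun i => (hfin.mem_toFinset.mp hx).1 i.succ
        · have hcoe : (({x ∈ hfin.toFinset | Fin.tail x = y} : Finset _) : Set _) =
              {x ∈ distStarConfigs k w E | Fin.tail x = y} := by
            ext; simp
          have := encard_distStarConfigs_fiber_le_two hk w E y
          rw [← hcoe, Set.encard_coe_eq_coe_finsetCard] at this
          exact_mod_cast this
    _ = 2 * E.card ^ k := by simp

theorem EuclideanSpace.norm_fin_two (a b : ℝ) : ‖!₂[a, b]‖ = √(a ^ 2 + b ^ 2) := by
  simp [EuclideanSpace.norm_eq, Fin.sum_univ_two]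

theorem exists_injective_norm_eq {ι : Type*} [Finite ι] (r : ι → ℝ) (hr : ∀ i, 0 < r i) :
    ∃ p : ι → Pt2, Injective p ∧ ∀ i, ‖p i‖ = r i := by
  obtain ⟨N, ⟨e⟩⟩ := Finite.exists_equiv_fin ι
  set c : ι → ℝ := fun i => (e i : ℝ) / N
  have hc : ∀ i, c i ^ 2 ≤ 1 := fun i => pow_le_one₀ (by positivity)
    (div_le_one_of_le₀ (by exact_mod_cast (e i).isLt.le) (by positivity))
  set p : ι → Pt2 := fun i => !₂[r i * c i, r i * √(1 - c i ^ 2)]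
  have hp : ∀ i, ‖p i‖ = r i := fun i => by
    rw [EuclideanSpace.norm_fin_two, mul_pow, mul_pow, Real.sq_sqrt (by linarith [hc i]), ← mul_add,
      add_sub_cancel, mul_one, Real.sqrt_sq (hr i).le]
  refine ⟨p, fun i j hij => e.injective (Fin.ext ?_), hp⟩
  have hrij : r i = r j := by rw [← hp i, ← hp j, hij]
  have hcij : r i * c i = r j * c j := congrArg (· 0) hij
  rw [hrij, mul_right_inj' (hr j).ne'] at hcij
  have hN : (N : ℝ) ≠ 0 := Nat.cast_ne_zero.mpr (e i).pos.ne'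
  exact_mod_cast (div_left_inj' hN).mp hcij

theorem pow_le_ncard_distStarConfigs {k m : ℕ} (w : Fin k → ℝ) (hw : ∀ i, 0 < w i)
    (p : Fin k × Fin m → Pt2) (hp : Injective p) (hpw : ∀ ij, ‖p ij‖ = w ij.1)
    (E : Finset Pt2) (h0 : 0 ∈ E) (hpE : ∀ ij, p ij ∈ E) :
    m ^ k ≤ (distStarConfigs k w E).ncard := by
  let star (j : Fin k → Fin m) : Fin (k + 1) → Pt2 := Fin.cons 0 fun i => p (i, j i)
  have hstar_inj : Injective star := fun j j' h => funext fun i =>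
    (Prod.ext_iff.mp (hp (congrFun (Fin.cons_right_injective _ h) i))).2
  have hstar_mem : ∀ j, star j ∈ distStarConfigs k w E := fun j => by
    refine ⟨Fin.cases h0 fun i => hpE _, Fin.cons_injective_iff.mpr ⟨?_, ?_⟩, fun i => ?_⟩
    · rintro ⟨i, hi⟩
      exact (hw i).ne' (by simpa [hi] using (hpw (i, j i)).symm)
    · exact fun i i' h => (Prod.ext_iff.mp (hp h)).1
    · simp [star, hpw]
  calc m ^ k = (Set.range star).ncard := by
        rw [Set.ncard_range_of_injective hstar_inj, Nat.card_fun]; simp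
    _ ≤ (distStarConfigs k w E).ncard :=
        Set.ncard_le_ncard (Set.range_subset_iff.mpr hstar_mem) (finite_distStarConfigs k w E)

theorem exists_card_eq_pow_le_ncard_distStarConfigs {k m n : ℕ} (w : Fin k → ℝ)
    (hw : ∀ i, 0 < w i) (hn : k * m < n) :
    ∃ E : Finset Pt2, E.card = n ∧ m ^ k ≤ (distStarConfigs k w E).ncard := by
  classical
  obtain ⟨p, hp, hpw⟩ := exists_injective_norm_eq (fun ij : Fin k × Fin m => w ij.1) (hw ·.1)
  have hcard : (insert 0 (Finset.univ.image p)).card ≤ n :=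
    calc _ ≤ (Finset.univ.image p).card + 1 := Finset.card_insert_le _ _
      _ ≤ k * m + 1 := by grw [Finset.card_image_le]; simp
      _ ≤ n := hn
  obtain ⟨E, hE, rfl⟩ := Infinite.exists_superset_card_eq _ n hcard
  exact ⟨E, rfl, pow_le_ncard_distStarConfigs w hw p hp hpw E (hE (Finset.mem_insert_self _ _))
    fun ij => hE (Finset.mem_insert_of_mem (Finset.mem_image_of_mem p (Finset.mem_univ ij)))⟩

/-- **distance `k`-stars in the plane.** Fix `k ≥ 2` and positive weights
`w₁, …, w_k`.  (i) There is `C > 0` such that every set of `n` points in the plane has at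
most `C · n^k` distance `k`-star configurations; (ii) there are `c > 0` and `N` such that
for every `n > N` some set of `n` points in the plane has at least `c · n^k` of them. -/
theorem distance_kStar_bounds (k : ℕ) (hk : 2 ≤ k) (w : Fin k → ℝ) (hw : ∀ i, 0 < w i) :
    (∃ C : ℝ, 0 < C ∧ ∀ (n : ℕ) (E : Finset Pt2), E.card = n →
      ((distStarConfigs k w E).ncard : ℝ) ≤ C * (n : ℝ) ^ k) ∧
    (∃ c : ℝ, 0 < c ∧ ∃ N : ℕ, ∀ n : ℕ, N < n →
      ∃ E : Finset Pt2, E.card = n ∧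
        c * (n : ℝ) ^ k ≤ ((distStarConfigs k w E).ncard : ℝ)) := by
  refine ⟨⟨2, two_pos, fun n E hE => ?_⟩,
    ⟨(1 / (2 * (k + 1))) ^ k, by positivity, k, fun n hn => ?_⟩⟩
  · rw [← hE]
    exact_mod_cast ncard_distStarConfigs_le hk w E
  set m := n / (k + 1)
  have hm : 0 < m := Nat.div_pos hn k.succ_pos
  have hm_le : m * (k + 1) ≤ n := Nat.div_mul_le_self n (k + 1)
  have hm_gt : n < m * (k + 1) + (k + 1) := Nat.lt_div_mul_add k.succ_pos
  have hkm : k * m < n := by nlinarith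
  obtain ⟨E, hE, hmE⟩ := exists_card_eq_pow_le_ncard_distStarConfigs w hw hkm
  refine ⟨E, hE, ?_⟩
  calc (1 / (2 * (k + 1))) ^ k * (n : ℝ) ^ k = ((n : ℝ) / (2 * (k + 1))) ^ k := by
        rw [← mul_pow]; ring
    _ ≤ (m : ℝ) ^ k := by
        gcongr
        rw [div_le_iff₀ (by positivity)]
        exact_mod_cast (by nlinarith : n ≤ m * (2 * (k + 1)))
    _ ≤ _ := by exact_mod_cast hmE
end
end

section
/- Fix integers c ≥ 2 and h ≥ 1, and let w be any assignment of positive real weights to the edges of the perfect c-ary tree T_{c,h}. Then f(T_{c,h}; n) ≈ n^(c^h): there is a constant C > 0 such that every set of n points in ℝ² contains at most C · n^(c^h) distance T_{c,h}-configurations, and there exist a constant c' > 0 and N such that for every n > N some set of n points in ℝ² contains at least c' · n^(c^h) distance T_{c,h}-configurations. -/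
open scoped InnerProductSpace

noncomputable section

/-- The vertex set of the perfect `c`-ary rooted tree `T_{c,h}` of height `h`: a vertex is
a list of child-selectors of length at most `h` (the root is the empty list, and the
leaves are the lists of length exactly `h`).  Every vertex at depth `< h` has exactly `c`
children, and there are `c ^ h` leaves. -/
def TreeVert (c h : ℕ) : Type := {l : List (Fin c) // l.length ≤ h}

/-- Adjacency in the perfect `c`-ary tree `T_{c,h}`: a vertex is adjacent precisely to its
parent and to its children. -/
def treeAdj (c h : ℕ) (u v : TreeVert c h) : Prop :=
  (∃ i : Fin c, u.1 = i :: v.1) ∨ (∃ i : Fin c, v.1 = i :: u.1)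

/-- The set of distance `T_{c,h}`-configurations in a point set `E`, for an edge-weight
function `w`: injective maps `φ` from the vertices of `T_{c,h}` into `E` such that the
distance between the images of any two adjacent vertices equals the weight of the
corresponding edge. -/
def distTreeConfigs (c h : ℕ) (w : TreeVert c h → TreeVert c h → ℝ) (E : Finset Pt2) :
    Set (TreeVert c h → Pt2) :=
  {φ | (∀ v, φ v ∈ E) ∧ Function.Injective φ ∧
    ∀ u v, treeAdj c h u v → ‖φ u - φ v‖ = w u v}

/-!
Upper bound: if `u₀ ≠ u₁` are children of `v`, the point `φ v` lies on two circles with the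
distinct centres `φ u₀`, `φ u₁`, which meet in at most two points. So, going up from the leaves,
a configuration is determined by its `c ^ h` leaf images together with boundedly many bits.

Lower bound: embed `m` copies of every vertex so that each copy lies at the prescribed distance
from copy `0` of its parent; this is possible greedily, since circles are infinite. Choosing
one copy of each leaf independently gives `m ^ c ^ h` configurations on `O(m)` points.
-/

open Metric Module

section Spheres

variable {E : Type*} [NormedAddCommGroup E] [NormedSpace ℝ E]

theorem sphere_infinite_of_one_lt_rank (hE : 1 < Module.rank ℝ E) (x : E) {r : ℝ} (hr : 0 < r) :
    (sphere x r).Infinite := by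
  have : Nontrivial E := (rank_pos_iff_nontrivial (R := ℝ)).mp (zero_lt_one.trans hE)
  obtain ⟨y, hy⟩ := (NormedSpace.sphere_nonempty (x := x)).mpr hr.le
  have hy' : x - (y - x) ∈ sphere x r := by
    rwa [mem_sphere_iff_norm, sub_sub_cancel_left, norm_neg, ← mem_sphere_iff_norm]
  refine (isPreconnected_sphere hE x r).infinite_of_nontrivial ⟨y, hy, _, hy', fun h => ?_⟩
  have : y - x = 0 := by
    refine (smul_eq_zero.mp ?_).resolve_left (two_ne_zero (α := ℝ))
    rw [two_smul]
    nth_rewrite 1 [h]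
    abel
  rw [mem_sphere_iff_norm, this, norm_zero] at hy
  exact hr.ne hy

end Spheres

theorem one_lt_rank_pt2 : 1 < Module.rank ℝ Pt2 :=
  one_lt_rank_of_one_lt_finrank (by rw [finrank_euclideanSpace_fin]; norm_num)

section Circles

variable {V P : Type*} [NormedAddCommGroup V] [InnerProductSpace ℝ V] [MetricSpace P]
  [NormedAddTorsor V P]

def circleInterPoint (a b : P) (r s : ℝ) : P :=
  Classical.epsilon fun x => dist x a = r ∧ dist x b = s

/-- Two circles with distinct centres in a plane meet in at most two points, so a common point
is determined by whether or not it is the chosen one. -/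
theorem eq_of_dist_eq_of_dist_eq_of_eq_circleInterPoint_iff [FiniteDimensional ℝ V]
    (hd : finrank ℝ V = 2) {a b x y : P} {r s : ℝ} (hab : a ≠ b) (hxa : dist x a = r)
    (hxb : dist x b = s) (hya : dist y a = r) (hyb : dist y b = s)
    (hxy : x = circleInterPoint a b r s ↔ y = circleInterPoint a b r s) : x = y := by
  set p := circleInterPoint a b r s
  have hp : dist p a = r ∧ dist p b = s :=
    Classical.epsilon_spec (p := fun z => dist z a = r ∧ dist z b = s) ⟨x, hxa, hxb⟩
  by_cases hx : x = p
  · rw [hx, hxy.mp hx]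
  · exact ((EuclideanGeometry.eq_of_dist_eq_of_dist_eq_of_finrank_eq_two hd hab (Ne.symm hx)
      hp.1 hxa hya hp.2 hxb hyb).resolve_left fun hy => hx (hxy.mpr hy)).symm

end Circles

/-- Vertices are placed in order of depth, each on the sphere around its parent, avoiding the
finitely many points already used. -/
theorem exists_injOn_dist_parent_eq {X α : Type*} [MetricSpace X] [Nonempty X]
    (hX : ∀ (x : X) {r : ℝ}, 0 < r → (sphere x r).Infinite)
    (parent : α → α) (depth : α → ℕ) (r : α → ℝ) (hr : ∀ a, 0 < r a) (S : Finset α)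
    (hS : ∀ a ∈ S, 0 < depth a → parent a ∈ S ∧ depth (parent a) < depth a) :
    ∃ f : α → X, Set.InjOn f S ∧ ∀ a ∈ S, 0 < depth a → dist (f a) (f (parent a)) = r a := by
  classical
  induction S using Finset.induction_on_max_value depth with
  | empty => exact ⟨fun _ => Classical.arbitrary X, by simp, by simp⟩
  | insert a s ha hmax ih =>
    have hparent : ∀ b ∈ s, 0 < depth b → parent b ∈ s := fun b hb hb0 => by
      obtain ⟨hpb, hlt⟩ := hS b (Finset.mem_insert_of_mem hb) hb0
      refine (Finset.mem_insert.mp hpb).resolve_left ?_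
      rintro rfl
      exact (hmax b hb).not_gt hlt
    obtain ⟨f, hinj, hdist⟩ := ih fun b hb hb0 =>
      ⟨hparent b hb hb0, (hS b (Finset.mem_insert_of_mem hb) hb0).2⟩
    obtain ⟨y, hy, hyf⟩ := (hX (f (parent a)) (hr a)).exists_notMem_finset (s.image f)
    have hfs : Set.EqOn (Function.update f a y) f s := fun b hb =>
      Function.update_of_ne (ne_of_mem_of_not_mem hb ha) _ _
    refine ⟨Function.update f a y, ?_, ?_⟩
    · rw [Finset.coe_insert, Set.injOn_insert (by simpa using ha), hfs.injOn_iff, hfs.image_eq]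
      simpa using ⟨hinj, fun b hb hfb => hyf (Finset.mem_image.mpr ⟨b, hb, hfb⟩)⟩
    · intro b hb hb0
      rcases Finset.mem_insert.mp hb with rfl | hb
      · obtain ⟨hpb, hlt⟩ := hS b hb hb0
        have hpb' : parent b ∈ s :=
          (Finset.mem_insert.mp hpb).resolve_left fun h => hlt.ne (congrArg depth h)
        rw [Function.update_self, hfs hpb']
        exact hy
      · rw [hfs hb, hfs (hparent b hb hb0)]
        exact hdist b hb hb0

theorem exists_card_eq_mul_pow_le_of_card_le_mul {α : Type*} [Infinite α] {F : Finset α → ℕ}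
    (hF : Monotone F) {K : ℕ} (hK : 0 < K) (L : ℕ)
    (hcon : ∀ m, 0 < m → ∃ E : Finset α, E.card ≤ K * m ∧ m ^ L ≤ F E) :
    ∃ c' : ℝ, 0 < c' ∧ ∃ N : ℕ, ∀ n, N < n →
      ∃ E : Finset α, E.card = n ∧ c' * (n : ℝ) ^ L ≤ F E := by
  refine ⟨(2 * K : ℝ)⁻¹ ^ L, by positivity, K, fun n hn => ?_⟩
  set m := n / K
  obtain ⟨E, hEcard, hEF⟩ := hcon m (Nat.div_pos hn.le hK)
  obtain ⟨E', hEE', hE'⟩ :=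
    Infinite.exists_superset_card_eq E n (hEcard.trans (Nat.mul_div_le n K))
  refine ⟨E', hE', ?_⟩
  have hnm : (n : ℝ) ≤ 2 * K * m := by
    have hlt : n < K * (m + 1) := Nat.lt_mul_div_succ n hK
    have hm : 1 ≤ m := Nat.div_pos hn.le hK
    exact_mod_cast (show n ≤ 2 * K * m by nlinarith)
  calc (2 * K : ℝ)⁻¹ ^ L * (n : ℝ) ^ L = ((2 * K : ℝ)⁻¹ * n) ^ L := (mul_pow ..).symm
    _ ≤ (m : ℝ) ^ L := by
      gcongr
      rw [inv_mul_le_iff₀ (by positivity)]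
      exact hnm
    _ ≤ F E' := by exact_mod_cast hEF.trans (hF hEE')

namespace TreeVert

variable {c h : ℕ}

instance : Fintype (TreeVert c h) := (List.finite_length_le (Fin c) h).fintype

def leaf (l : List.Vector (Fin c) h) : TreeVert c h := ⟨l.1, l.2.le⟩

def parent (v : TreeVert c h) : TreeVert c h :=
  ⟨v.1.tail, (List.length_tail ▸ Nat.sub_le _ _).trans v.2⟩

def child (v : TreeVert c h) (hv : v.1.length < h) (i : Fin c) : TreeVert c h := ⟨i :: v.1, hv⟩

theorem child_injective (v : TreeVert c h) (hv : v.1.length < h) :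
    Function.Injective (v.child hv) :=
  fun _ _ hij => List.head_eq_of_cons_eq (congrArg Subtype.val hij)

theorem treeAdj_child (v : TreeVert c h) (hv : v.1.length < h) (i : Fin c) :
    treeAdj c h (v.child hv i) v :=
  Or.inl ⟨i, rfl⟩

theorem treeAdj_parent {v : TreeVert c h} (hv : v.1 ≠ []) : treeAdj c h v v.parent := by
  obtain ⟨i, l, hil⟩ := List.exists_cons_of_ne_nil hv
  exact Or.inl ⟨i, by simp [parent, hil]⟩

theorem parent_eq_of_eq_cons {u v : TreeVert c h} {i : Fin c} (huv : u.1 = i :: v.1) :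
    u.parent = v :=
  Subtype.ext (by simp [parent, huv])

theorem card_pos : 0 < Fintype.card (TreeVert c h) :=
  Fintype.card_pos_iff.mpr ⟨⟨[], h.zero_le⟩⟩

variable {m : ℕ}

def copyIndex (s : List.Vector (Fin c) h → Fin m) (v : TreeVert c h) : ℕ :=
  if hv : v.1.length = h then s ⟨v.1, hv⟩ else 0

theorem copyIndex_lt (hm : 0 < m) (s : List.Vector (Fin c) h → Fin m) (v : TreeVert c h) :
    v.copyIndex s < m := by
  unfold copyIndex
  split_ifs
  exacts [Fin.is_lt _, hm]

theorem copyIndex_leaf (s : List.Vector (Fin c) h → Fin m) (l : List.Vector (Fin c) h) :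
    (leaf l).copyIndex s = s l :=
  dif_pos l.2

theorem copyIndex_of_length_lt (s : List.Vector (Fin c) h → Fin m) {v : TreeVert c h}
    (hv : v.1.length < h) : v.copyIndex s = 0 :=
  dif_neg hv.ne

end TreeVert

section Configurations

variable {c h : ℕ} {w : TreeVert c h → TreeVert c h → ℝ}

theorem distTreeConfigs_mono {E E' : Finset Pt2} (hEE' : E ⊆ E') :
    distTreeConfigs c h w E ⊆ distTreeConfigs c h w E' :=
  fun _ ⟨hmem, hinj, hdist⟩ => ⟨fun v => hEE' (hmem v), hinj, hdist⟩

theorem distTreeConfigs_finite (E : Finset Pt2) : (distTreeConfigs c h w E).Finite :=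
  (Set.Finite.pi fun _ => E.finite_toSet).subset fun _ hφ v _ => hφ.1 v

theorem dist_child_eq {E : Finset Pt2} {φ : TreeVert c h → Pt2}
    (hφ : φ ∈ distTreeConfigs c h w E) (v : TreeVert c h) (hv : v.1.length < h) (i : Fin c) :
    dist (φ v) (φ (v.child hv i)) = w (v.child hv i) v := by
  rw [dist_comm, dist_eq_norm]
  exact hφ.2.2 _ _ (v.treeAdj_child hv i)

/-- Only triples `(u₀, u₁, v)` with `u₀`, `u₁` children of `v` matter. -/
def configMarks (w : TreeVert c h → TreeVert c h → ℝ) (φ : TreeVert c h → Pt2)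
    (t : TreeVert c h × TreeVert c h × TreeVert c h) : Prop :=
  φ t.2.2 = circleInterPoint (φ t.1) (φ t.2.1) (w t.1 t.2.2) (w t.2.1 t.2.2)

theorem eq_of_leaf_eq_of_configMarks_eq (hc : 2 ≤ c) {E : Finset Pt2}
    {φ ψ : TreeVert c h → Pt2} (hφ : φ ∈ distTreeConfigs c h w E)
    (hψ : ψ ∈ distTreeConfigs c h w E) (hleaf : ∀ l, φ (TreeVert.leaf l) = ψ (TreeVert.leaf l))
    (hmarks : configMarks w φ = configMarks w ψ) : φ = ψ := by
  suffices ∀ k (v : TreeVert c h), v.1.length + k = h → φ v = ψ v from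
    funext fun v => this _ v (Nat.add_sub_cancel' v.2)
  intro k
  induction k with
  | zero => exact fun v hv => hleaf ⟨v.1, hv⟩
  | succ k ih =>
    intro v hv
    have hlt : v.1.length < h := by omega
    set u₀ := v.child hlt ⟨0, by omega⟩
    set u₁ := v.child hlt ⟨1, by omega⟩
    have h₀ : φ u₀ = ψ u₀ := ih u₀ (by simp only [u₀, TreeVert.child, List.length_cons]; omega)
    have h₁ : φ u₁ = ψ u₁ := ih u₁ (by simp only [u₁, TreeVert.child, List.length_cons]; omega)
    have hne : φ u₀ ≠ φ u₁ := hφ.2.1.ne ((v.child_injective hlt).ne (by simp))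
    have hmark : configMarks w φ (u₀, u₁, v) ↔ configMarks w ψ (u₀, u₁, v) := by rw [hmarks]
    simp only [configMarks, ← h₀, ← h₁] at hmark
    refine eq_of_dist_eq_of_dist_eq_of_eq_circleInterPoint_iff finrank_euclideanSpace_fin hne
      (dist_child_eq hφ v hlt _) (dist_child_eq hφ v hlt _) ?_ ?_ hmark
    · rw [h₀]; exact dist_child_eq hψ v hlt _
    · rw [h₁]; exact dist_child_eq hψ v hlt _

theorem ncard_distTreeConfigs_le (hc : 2 ≤ c) (w : TreeVert c h → TreeVert c h → ℝ)
    (E : Finset Pt2) :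
    (distTreeConfigs c h w E).ncard ≤ 2 ^ Fintype.card (TreeVert c h) ^ 3 * E.card ^ c ^ h := by
  let encode (φ : distTreeConfigs c h w E) :
      (TreeVert c h × TreeVert c h × TreeVert c h → Prop) × (List.Vector (Fin c) h → E) :=
    (configMarks w φ, fun l => ⟨φ.1 (TreeVert.leaf l), φ.2.1 _⟩)
  have hencode : Function.Injective encode := fun φ ψ hφψ =>
    Subtype.ext <| eq_of_leaf_eq_of_configMarks_eq hc φ.2 ψ.2
      (fun l => congrArg Subtype.val (congrFun (congrArg Prod.snd hφψ) l))
      (congrArg Prod.fst hφψ)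
  calc (distTreeConfigs c h w E).ncard = Nat.card (distTreeConfigs c h w E) :=
        (Nat.card_coe_set_eq _).symm
    _ ≤ _ := Nat.card_le_card_of_injective encode hencode
    _ = _ := by
      rw [Nat.card_prod, Nat.card_fun, Nat.card_fun, Nat.card_prod, Nat.card_prod,
        Nat.card_eq_fintype_card (α := TreeVert c h), Nat.card_eq_fintype_card (α := Prop), Fintype.card_prop,
        Nat.card_eq_fintype_card (α := List.Vector (Fin c) h), card_vector, Fintype.card_fin,
        Nat.card_eq_finsetCard]
      ring

end Configurations

section Construction

open Finset

variable {c h m : ℕ} {w : TreeVert c h → TreeVert c h → ℝ}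

theorem mem_distTreeConfigs_of_injOn (hsym : ∀ u v, w u v = w v u) (hm : 0 < m)
    {f : TreeVert c h × ℕ → Pt2} (hf : Set.InjOn f (univ ×ˢ range m : Finset (TreeVert c h × ℕ)))
    (hdist : ∀ v j, j < m → v.1 ≠ [] → dist (f (v, j)) (f (v.parent, 0)) = w v v.parent)
    (s : List.Vector (Fin c) h → Fin m) :
    (fun v => f (v, v.copyIndex s)) ∈ distTreeConfigs c h w ((univ ×ˢ range m).image f) := by
  have hmem (v : TreeVert c h) : (v, v.copyIndex s) ∈ univ ×ˢ range m :=
    mem_product.mpr ⟨mem_univ _, mem_range.mpr (v.copyIndex_lt hm s)⟩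
  refine ⟨fun v => mem_image_of_mem f (hmem v),
    fun u v huv => congrArg Prod.fst (hf (hmem u) (hmem v) huv), ?_⟩
  have hchild (u v : TreeVert c h) (i : Fin c) (huv : u.1 = i :: v.1) :
      ‖f (u, u.copyIndex s) - f (v, v.copyIndex s)‖ = w u v := by
    have hv : v.1.length < h := by simpa [huv] using u.2
    rw [← dist_eq_norm, TreeVert.copyIndex_of_length_lt s hv,
      ← TreeVert.parent_eq_of_eq_cons huv]
    exact hdist u _ (u.copyIndex_lt hm s) (huv ▸ List.cons_ne_nil _ _)
  rintro u v (⟨i, huv⟩ | ⟨i, hvu⟩)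
  · exact hchild u v i huv
  · rw [norm_sub_rev, hsym]
    exact hchild v u i hvu

theorem exists_card_le_pow_le_ncard_distTreeConfigs (hsym : ∀ u v, w u v = w v u)
    (hpos : ∀ u v, treeAdj c h u v → 0 < w u v) (hm : 0 < m) :
    ∃ E : Finset Pt2, E.card ≤ Fintype.card (TreeVert c h) * m ∧
      m ^ c ^ h ≤ (distTreeConfigs c h w E).ncard := by
  classical
  set S : Finset (TreeVert c h × ℕ) := univ ×ˢ range m
  obtain ⟨f, hf, hdist⟩ := exists_injOn_dist_parent_eq
    (fun x _ hr => sphere_infinite_of_one_lt_rank one_lt_rank_pt2 x hr)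
    (fun a : TreeVert c h × ℕ => (a.1.parent, 0)) (fun a => a.1.1.length)
    (fun a => if a.1.1 = [] then 1 else w a.1 a.1.parent) -- the radius `1` at roots is unused
    (fun a => by
      split_ifs with ha
      exacts [one_pos, hpos _ _ (TreeVert.treeAdj_parent ha)])
    S (fun a _ ha => ⟨mem_product.mpr ⟨mem_univ _, mem_range.mpr hm⟩, by
      simp only [TreeVert.parent, List.length_tail]; omega⟩)
  refine ⟨S.image f, card_image_le.trans (by simp [S]), ?_⟩
  have : Finite (distTreeConfigs c h w (S.image f)) := (distTreeConfigs_finite _).to_subtype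
  let config (s : List.Vector (Fin c) h → Fin m) : distTreeConfigs c h w (S.image f) :=
    ⟨_, mem_distTreeConfigs_of_injOn hsym hm hf (fun v j hj hv => by
      simpa [hv] using hdist (v, j) (mem_product.mpr ⟨mem_univ _, mem_range.mpr hj⟩)
        (List.length_pos_iff.mpr hv)) s⟩
  have hconfig : Function.Injective config := fun s s' hss' => funext fun l => by
    have hmem (s : List.Vector (Fin c) h → Fin m) : (TreeVert.leaf l, (s l : ℕ)) ∈ S :=
      mem_product.mpr ⟨mem_univ _, mem_range.mpr (s l).is_lt⟩
    have := congrFun (congrArg Subtype.val hss') (TreeVert.leaf l)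
    simp only [config, TreeVert.copyIndex_leaf] at this
    exact Fin.ext (congrArg Prod.snd (hf (hmem s) (hmem s') this))
  calc m ^ c ^ h = Nat.card (List.Vector (Fin c) h → Fin m) := by
        rw [Nat.card_fun, Nat.card_eq_fintype_card (α := List.Vector (Fin c) h), card_vector,
          Fintype.card_fin, Nat.card_eq_fintype_card, Fintype.card_fin]
    _ ≤ Nat.card (distTreeConfigs c h w (S.image f)) :=
        Nat.card_le_card_of_injective config hconfig
    _ = _ := Nat.card_coe_set_eq _

end Construction

theorem distance_tree_bounds_general (c h : ℕ) (hc : 2 ≤ c)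
    (w : TreeVert c h → TreeVert c h → ℝ)
    (hsym : ∀ u v, w u v = w v u)
    (hpos : ∀ u v, treeAdj c h u v → 0 < w u v) :
    (∃ C : ℝ, 0 < C ∧ ∀ (n : ℕ) (E : Finset Pt2), E.card = n →
      ((distTreeConfigs c h w E).ncard : ℝ) ≤ C * (n : ℝ) ^ (c ^ h)) ∧
    (∃ c' : ℝ, 0 < c' ∧ ∃ N : ℕ, ∀ n : ℕ, N < n →
      ∃ E : Finset Pt2, E.card = n ∧
        c' * (n : ℝ) ^ (c ^ h) ≤ ((distTreeConfigs c h w E).ncard : ℝ)) := by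
  refine ⟨⟨2 ^ Fintype.card (TreeVert c h) ^ 3, by positivity, fun n E hE => ?_⟩, ?_⟩
  · rw [← hE]
    exact_mod_cast ncard_distTreeConfigs_le hc w E
  · exact exists_card_eq_mul_pow_le_of_card_le_mul
      (fun _ _ hEE' => Set.ncard_le_ncard (distTreeConfigs_mono hEE') (distTreeConfigs_finite _))
      TreeVert.card_pos (c ^ h)
      fun _ hm => exists_card_le_pow_le_ncard_distTreeConfigs hsym hpos hm

/-- **distance configurations on perfect `c`-ary trees, in the plane.**
Fix `c ≥ 2`, `h ≥ 1`, and any assignment `w` of positive weights to the edges of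
`T_{c,h}`.  Then `f(T_{c,h}; n) ≈ n^(c^h)`: there is `C > 0` such that every set of `n`
points in the plane has at most `C · n^(c^h)` distance `T_{c,h}`-configurations, and
there are `c' > 0` and `N` such that for every `n > N` some set of `n` points in the
plane has at least `c' · n^(c^h)` of them. -/
theorem distance_tree_bounds (c h : ℕ) (hc : 2 ≤ c) (hh : 1 ≤ h)
    (w : TreeVert c h → TreeVert c h → ℝ)
    (hsym : ∀ u v, w u v = w v u)
    (hpos : ∀ u v, treeAdj c h u v → 0 < w u v) :
    (∃ C : ℝ, 0 < C ∧ ∀ (n : ℕ) (E : Finset Pt2), E.card = n →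
      ((distTreeConfigs c h w E).ncard : ℝ) ≤ C * (n : ℝ) ^ (c ^ h)) ∧
    (∃ c' : ℝ, 0 < c' ∧ ∃ N : ℕ, ∀ n : ℕ, N < n →
      ∃ E : Finset Pt2, E.card = n ∧
        c' * (n : ℝ) ^ (c ^ h) ≤ ((distTreeConfigs c h w E).ncard : ℝ)) :=
  distance_tree_bounds_general c h hc w hsym hpos
end
end
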